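/- arXiv:2205.06804 — 4 statements merged into one kernel-verified Lean document; each statement's English description precedes it below -/
import Mathlib

section
/- Let M ∈ C^{n×n} be diagonalizable, M = V D V^{-1}, and define for each eigenvalue λ_i the eigenvalue condition number κ(λ_i) = ‖v_i‖‖w_i‖ where v_i, w_i are the corresponding right and left eigenvectors normalized so that w_i* v_i = 1. Then the eigenvector condition number satisfies κ_V(M) ≤ √(n Σ_{i=1}^n κ(λ_i)²). -/
open Matrix

/-!
Rescaling the columns of `V` by positive reals `t i` (and the rows of `V⁻¹` by `1 / t i`)
yields another diagonalization of `M`. With `t i = √(‖w i‖ / ‖v i‖)` the Frobenius norms of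
both the rescaled `V` and its inverse become `√(∑ i, κ i)`, and the operator norm is bounded by
the Frobenius norm, so `κ_V(M) ≤ ∑ i, κ i ≤ √(n ∑ i, κ i ^ 2)` by Cauchy–Schwarz.
-/

/-- Operator (ℓ²→ℓ²) norm of a complex matrix. -/
noncomputable def opNorm {m : Type*} [Fintype m] [DecidableEq m] (M : Matrix m m ℂ) : ℝ :=
  ‖LinearMap.toContinuousLinearMap (Matrix.toEuclideanLin M)‖

/-- Eigenvector condition number: infimum of `‖V‖‖V⁻¹‖` over diagonalizations `M = VDV⁻¹`. -/
noncomputable def kappaV {n : ℕ} (M : Matrix (Fin n) (Fin n) ℂ) : ℝ :=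
  sInf {x | ∃ V D : Matrix (Fin n) (Fin n) ℂ,
    IsUnit V ∧ D.IsDiag ∧ M = V * D * V⁻¹ ∧ x = opNorm V * opNorm V⁻¹}

/-- ℓ² norm of a vector. -/
noncomputable def vecNorm {n : ℕ} (x : Fin n → ℂ) : ℝ := Real.sqrt (∑ i, ‖x i‖ ^ 2)

theorem norm_dotProduct_le {m R : Type*} [Fintype m] [NonUnitalSeminormedRing R] (u v : m → R) :
    ‖u ⬝ᵥ v‖ ≤ √(∑ k, ‖u k‖ ^ 2) * √(∑ k, ‖v k‖ ^ 2) :=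
  calc ‖u ⬝ᵥ v‖ ≤ ∑ k, ‖u k‖ * ‖v k‖ := norm_sum_le_of_le _ fun _ _ => norm_mul_le _ _
    _ ≤ _ := Real.sum_mul_le_sqrt_mul_sqrt _ _ _

theorem opNorm_le_sqrt_sum_sq {m : Type*} [Fintype m] [DecidableEq m] (A : Matrix m m ℂ) :
    opNorm A ≤ √(∑ i, ∑ j, ‖A i j‖ ^ 2) := by
  refine ContinuousLinearMap.opNorm_le_bound _ (Real.sqrt_nonneg _) fun x => ?_
  have hrow : ∀ i, ‖(A *ᵥ x) i‖ ^ 2 ≤ (∑ j, ‖A i j‖ ^ 2) * ‖x‖ ^ 2 := fun i => by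
    rw [EuclideanSpace.norm_sq_eq, ← Real.sq_sqrt (by positivity : 0 ≤ ∑ j, ‖A i j‖ ^ 2),
      ← Real.sq_sqrt (by positivity : 0 ≤ ∑ j, ‖x j‖ ^ 2), ← mul_pow]
    exact pow_le_pow_left₀ (norm_nonneg _) (norm_dotProduct_le _ _) 2
  rw [← pow_le_pow_iff_left₀ (norm_nonneg _) (by positivity) two_ne_zero, mul_pow,
    Real.sq_sqrt (by positivity), Finset.sum_mul, LinearMap.coe_toContinuousLinearMap',
    toLpLin_apply, EuclideanSpace.norm_sq_eq]
  exact Finset.sum_le_sum fun i _ => hrow i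

namespace Matrix

theorem sum_sq_norm_mul_diagonal {m R : Type*} [Fintype m] [DecidableEq m] [NormedDivisionRing R]
    (A : Matrix m m R) (s : m → R) :
    ∑ i, ∑ j, ‖(A * diagonal s) i j‖ ^ 2 = ∑ j, ‖s j‖ ^ 2 * ∑ i, ‖A i j‖ ^ 2 := by
  simp only [mul_diagonal, norm_mul, mul_pow, Finset.mul_sum]
  rw [Finset.sum_comm]
  exact Finset.sum_congr rfl fun j _ => Finset.sum_congr rfl fun i _ => mul_comm _ _

theorem sum_sq_norm_diagonal_mul {m R : Type*} [Fintype m] [DecidableEq m] [NormedDivisionRing R]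
    (A : Matrix m m R) (s : m → R) :
    ∑ i, ∑ j, ‖(diagonal s * A) i j‖ ^ 2 = ∑ i, ‖s i‖ ^ 2 * ∑ j, ‖A i j‖ ^ 2 := by
  simp only [diagonal_mul, norm_mul, mul_pow, Finset.mul_sum]

theorem diagonal_mul_diagonal_inv {m K : Type*} [Fintype m] [DecidableEq m] [Field K]
    {s : m → K} (hs : ∀ i, s i ≠ 0) : diagonal s * diagonal s⁻¹ = 1 := by
  rw [diagonal_mul_diagonal, ← diagonal_one]
  exact congrArg diagonal (funext fun i => mul_inv_cancel₀ (hs i))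

theorem inv_mul_diagonal {m K : Type*} [Fintype m] [DecidableEq m] [Field K]
    {V : Matrix m m K} (hV : IsUnit V) {s : m → K} (hs : ∀ i, s i ≠ 0) :
    (V * diagonal s)⁻¹ = diagonal s⁻¹ * V⁻¹ := by
  refine inv_eq_right_inv ?_
  rw [mul_assoc, ← mul_assoc (diagonal s), diagonal_mul_diagonal_inv hs, one_mul,
    mul_nonsing_inv V ((isUnit_iff_isUnit_det V).mp hV)]

theorem IsDiag.eq_conj_mul_diagonal {m K : Type*} [Fintype m] [DecidableEq m] [Field K]
    {M V D : Matrix m m K} (hV : IsUnit V) (hD : D.IsDiag) (hM : M = V * D * V⁻¹)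
    {s : m → K} (hs : ∀ i, s i ≠ 0) :
    M = V * diagonal s * D * (V * diagonal s)⁻¹ := by
  have hcomm : diagonal s * D = D * diagonal s := by
    rw [← hD.diagonal_diag]
    exact commute_diagonal _ _
  rw [inv_mul_diagonal hV hs, hM, mul_assoc V (diagonal s) D, hcomm]
  simp only [mul_assoc]
  rw [← mul_assoc (diagonal s), diagonal_mul_diagonal_inv hs, one_mul]

end Matrix

theorem kappaV_le_opNorm_mul_opNorm_inv {n : ℕ} {M V D : Matrix (Fin n) (Fin n) ℂ}
    (hV : IsUnit V) (hD : D.IsDiag) (hM : M = V * D * V⁻¹) :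
    kappaV M ≤ opNorm V * opNorm V⁻¹ :=
  csInf_le ⟨0, fun _ ⟨_, _, _, _, _, hx⟩ => hx ▸ mul_nonneg (norm_nonneg _) (norm_nonneg _)⟩
    ⟨V, D, hV, hD, hM, rfl⟩

theorem vecNorm_sq {n : ℕ} (x : Fin n → ℂ) : vecNorm x ^ 2 = ∑ i, ‖x i‖ ^ 2 :=
  Real.sq_sqrt (by positivity)

theorem one_le_vecNorm_mul_vecNorm {n : ℕ} {u v : Fin n → ℂ} (h : u ⬝ᵥ v = 1) :
    1 ≤ vecNorm u * vecNorm v := by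
  simpa [h, vecNorm] using norm_dotProduct_le u v

theorem kappaV_le_of_mul_diagonal {n : ℕ} {M V D : Matrix (Fin n) (Fin n) ℂ}
    (hV : IsUnit V) (hD : D.IsDiag) (hM : M = V * D * V⁻¹) {s : Fin n → ℂ} (hs : ∀ i, s i ≠ 0) :
    kappaV M ≤ √(∑ j, ‖s j‖ ^ 2 * vecNorm (fun k => V k j) ^ 2) *
      √(∑ i, (‖s i‖ ^ 2)⁻¹ * vecNorm (fun k => V⁻¹ i k) ^ 2) := by
  have hS : IsUnit (diagonal s) := isUnit_diagonal.mpr (Pi.isUnit_iff.mpr fun i => (hs i).isUnit)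
  calc kappaV M ≤ opNorm (V * diagonal s) * opNorm (V * diagonal s)⁻¹ :=
        kappaV_le_opNorm_mul_opNorm_inv (hV.mul hS) hD (hD.eq_conj_mul_diagonal hV hM hs)
    _ ≤ _ := by
        refine mul_le_mul ((opNorm_le_sqrt_sum_sq _).trans_eq ?_)
          ((opNorm_le_sqrt_sum_sq _).trans_eq ?_) (norm_nonneg _) (Real.sqrt_nonneg _)
        · simp only [sum_sq_norm_mul_diagonal, vecNorm_sq]
        · simp only [inv_mul_diagonal hV hs, sum_sq_norm_diagonal_mul, vecNorm_sq, Pi.inv_apply,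
            norm_inv, inv_pow]

theorem kappaV_le_sum_vecNorm_mul_vecNorm {n : ℕ} {M V D : Matrix (Fin n) (Fin n) ℂ}
    (hV : IsUnit V) (hD : D.IsDiag) (hM : M = V * D * V⁻¹) :
    kappaV M ≤ ∑ i, vecNorm (fun k => V k i) * vecNorm (fun k => V⁻¹ i k) := by
  set c : Fin n → ℝ := fun i => vecNorm (fun k => V k i)
  set d : Fin n → ℝ := fun i => vecNorm (fun k => V⁻¹ i k)
  have hdc : ∀ i, 1 ≤ d i * c i := fun i => one_le_vecNorm_mul_vecNorm <| by
    simpa [mul_apply, dotProduct] using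
      congrFun (congrFun (nonsing_inv_mul V ((isUnit_iff_isUnit_det V).mp hV)) i) i
  have hc : ∀ i, 0 < c i := fun i =>
    pos_of_mul_pos_right (one_pos.trans_le (hdc i)) (Real.sqrt_nonneg _)
  have hd : ∀ i, 0 < d i := fun i =>
    pos_of_mul_pos_left (one_pos.trans_le (hdc i)) (Real.sqrt_nonneg _)
  set s : Fin n → ℂ := fun i => (√(d i / c i) : ℂ)
  have hs : ∀ i, s i ≠ 0 := fun i =>
    Complex.ofReal_ne_zero.mpr (Real.sqrt_pos.mpr (div_pos (hd i) (hc i))).ne'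
  have hs_sq : ∀ i, ‖s i‖ ^ 2 = d i / c i := fun i => by
    rw [Complex.norm_real, Real.norm_eq_abs, sq_abs, Real.sq_sqrt (div_pos (hd i) (hc i)).le]
  have hcol : ∑ j, ‖s j‖ ^ 2 * c j ^ 2 = ∑ i, c i * d i :=
    Finset.sum_congr rfl fun j _ => by rw [hs_sq]; field_simp [(hc j).ne']
  have hrow : ∑ i, (‖s i‖ ^ 2)⁻¹ * d i ^ 2 = ∑ i, c i * d i :=
    Finset.sum_congr rfl fun i _ => by rw [hs_sq]; field_simp [(hd i).ne']
  calc kappaV M ≤ √(∑ i, c i * d i) * √(∑ i, c i * d i) :=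
        (kappaV_le_of_mul_diagonal hV hD hM hs).trans_eq
          (congrArg₂ (√· * √·) hcol hrow)
    _ = ∑ i, c i * d i :=
        Real.mul_self_sqrt (Finset.sum_nonneg fun i _ => (mul_pos (hc i) (hd i)).le)

/-- if `M = V D V⁻¹` is diagonalizable, and `κ i = ‖v_i‖ ‖w_i‖` where `v_i`
is the i-th column of `V` (right eigenvector) and `w_i*` the i-th row of `V⁻¹` (left
eigenvector, automatically normalized so `w_i* v_i = 1`), then
`κ_V(M) ≤ √(n ∑ i κ i ²)`. -/
theorem stmt_5 (n : ℕ) (M V D : Matrix (Fin n) (Fin n) ℂ)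
    (hV : IsUnit V) (hD : D.IsDiag) (hM : M = V * D * V⁻¹)
    (kappa : Fin n → ℝ)
    (hkappa : ∀ i, kappa i = vecNorm (fun k => V k i) * vecNorm (fun k => V⁻¹ i k)) :
    kappaV M ≤ Real.sqrt ((n : ℝ) * ∑ i, kappa i ^ 2) := by
  have hsum : kappaV M ≤ ∑ i, kappa i := by
    simpa only [← hkappa] using kappaV_le_sum_vecNorm_mul_vecNorm hV hD hM
  refine hsum.trans (Real.le_sqrt_of_sq_le ?_)
  simpa using sq_sum_le_card_mul_sum_sq (s := Finset.univ) (f := kappa)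
end

section
/- Let H ∈ C^{n×n} be upper Hessenberg and diagonalizable with spectral decomposition determined by V (so H = V D V^{-1} with ‖V‖ = ‖V^{-1}‖ = √κ_V(H)), and let Z_H be the random eigenvalue with P[Z_H = λ_i] = |e_n* V e_i|² / ‖e_n* V‖². Then for any function f defined on the eigenvalues of H, ‖e_n* f(H)‖ / κ_V(H) ≤ E[|f(Z_H)|²]^{1/2} ≤ κ_V(H) ‖e_n* f(H)‖. -/
open Matrix

section aux

open scoped Matrix.Norms.L2Operator

lemma opNorm_eq_l2 {m : Type*} [Fintype m] [DecidableEq m] (M : Matrix m m ℂ) :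
    opNorm M = ‖M‖ := rfl

lemma vecNorm_eq {n : ℕ} (x : Fin n → ℂ) :
    vecNorm x = ‖(WithLp.equiv 2 (Fin n → ℂ)).symm x‖ := by
  rw [vecNorm, EuclideanSpace.norm_eq]
  rfl

lemma vecNorm_nonneg' {n : ℕ} (x : Fin n → ℂ) : 0 ≤ vecNorm x := Real.sqrt_nonneg _

lemma vecNorm_mulVec_le {n : ℕ} (M : Matrix (Fin n) (Fin n) ℂ) (x : Fin n → ℂ) :
    vecNorm (M *ᵥ x) ≤ opNorm M * vecNorm x := by
  have h := M.l2_opNorm_mulVec ((WithLp.equiv 2 (Fin n → ℂ)).symm x)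
  simpa [vecNorm_eq, opNorm_eq_l2] using h

lemma vecNorm_star {n : ℕ} (x : Fin n → ℂ) : vecNorm (star x) = vecNorm x := by
  simp [vecNorm, Pi.star_apply]

lemma vecNorm_vecMul_le {n : ℕ} (M : Matrix (Fin n) (Fin n) ℂ) (x : Fin n → ℂ) :
    vecNorm (x ᵥ* M) ≤ opNorm M * vecNorm x := by
  have h1 : x ᵥ* M = star (Mᴴ *ᵥ star x) := by
    rw [Matrix.star_mulVec, star_star, Matrix.conjTranspose_conjTranspose]
  rw [h1, vecNorm_star]
  calc vecNorm (Mᴴ *ᵥ star x) ≤ opNorm Mᴴ * vecNorm (star x) := vecNorm_mulVec_le _ _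
    _ = opNorm M * vecNorm x := by
        rw [vecNorm_star, opNorm_eq_l2, opNorm_eq_l2, Matrix.l2_opNorm_conjTranspose]

end aux

set_option maxHeartbeats 1000000 in
/-- approximate functional calculus: let `H = V D V⁻¹` be a diagonalizable
upper Hessenberg matrix with `‖V‖ = ‖V⁻¹‖ = √κ_V(H)`, let `Z_H` take the value `λ_i = D i i`
with probability `|e_n* V e_i|²/‖e_n* V‖²`. Then for any `f` (acting on eigenvalues, with
`f(H) = V f(D) V⁻¹`), `‖e_n* f(H)‖/κ_V(H) ≤ E[|f(Z_H)|²]^{1/2} ≤ κ_V(H) ‖e_n* f(H)‖`. -/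
theorem stmt_10 (n : ℕ) (hn : 0 < n) (H V D : Matrix (Fin n) (Fin n) ℂ)
    (hHess : ∀ i j : Fin n, (j : ℕ) + 1 < (i : ℕ) → H i j = 0)
    (hV : IsUnit V) (hD : D.IsDiag) (hdiag : H = V * D * V⁻¹)
    (hVnorm : opNorm V = Real.sqrt (kappaV H))
    (hVinv : opNorm V⁻¹ = Real.sqrt (kappaV H))
    (en : Fin n) (hen : (en : ℕ) = n - 1)
    (f : ℂ → ℂ) :
    vecNorm (fun j => (V * Matrix.diagonal (fun i => f (D i i)) * V⁻¹) en j) / kappaV H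
        ≤ Real.sqrt (∑ i, (‖V en i‖ ^ 2 / ∑ k, ‖V en k‖ ^ 2) * ‖f (D i i)‖ ^ 2) ∧
      Real.sqrt (∑ i, (‖V en i‖ ^ 2 / ∑ k, ‖V en k‖ ^ 2) * ‖f (D i i)‖ ^ 2)
        ≤ kappaV H * vecNorm (fun j => (V * Matrix.diagonal (fun i => f (D i i)) * V⁻¹) en j) := by
  classical
  set κ := kappaV H with hκdef
  set s := Real.sqrt κ with hsdef
  have hκ0 : 0 ≤ κ := by
    apply Real.sInf_nonneg
    rintro x ⟨V', D', _, _, _, rfl⟩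
    exact mul_nonneg (norm_nonneg _) (norm_nonneg _)
  have hκsq : s * s = κ := Real.mul_self_sqrt hκ0
  have hdet : IsUnit V.det := (Matrix.isUnit_iff_isUnit_det V).mp hV
  have hVV : V * V⁻¹ = 1 := Matrix.mul_nonsing_inv V hdet
  have hVV' : V⁻¹ * V = 1 := Matrix.nonsing_inv_mul V hdet
  set w : Fin n → ℂ := fun i => V en i with hw
  set u : Fin n → ℂ := fun i => V en i * f (D i i) with hu
  set row : Fin n → ℂ := fun j => (V * Matrix.diagonal (fun i => f (D i i)) * V⁻¹) en j
    with hrowdef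
  have hrow : row = u ᵥ* V⁻¹ := by
    funext j
    simp [hrowdef, hu, Matrix.mul_apply, Matrix.diagonal_apply, Matrix.vecMul, dotProduct,
      mul_ite, ite_mul, mul_zero, zero_mul, Finset.sum_ite_eq, Finset.sum_ite_eq']
  have hu_row : u = row ᵥ* V := by
    rw [hrow, Matrix.vecMul_vecMul, hVV', Matrix.vecMul_one]
  have hsingle : (Pi.single en 1 : Fin n → ℂ) ᵥ* V = w := by
    funext j
    simp [Matrix.vecMul, dotProduct, Pi.single_apply, hw]
  have hback : w ᵥ* V⁻¹ = (Pi.single en 1 : Fin n → ℂ) := by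
    rw [← hsingle, Matrix.vecMul_vecMul, hVV, Matrix.vecMul_one]
  have hnorm_single : vecNorm (Pi.single en 1 : Fin n → ℂ) = 1 := by
    have h1 : (∑ i, ‖(Pi.single en 1 : Fin n → ℂ) i‖ ^ 2) = 1 := by
      rw [Fintype.sum_eq_single en (fun b hb => by simp [Pi.single_apply, hb])]
      simp
    rw [vecNorm, h1, Real.sqrt_one]
  have hb_le : vecNorm u ≤ s * vecNorm row := by
    have h := vecNorm_vecMul_le V row
    rwa [← hu_row, hVnorm] at h
  have ha_le : vecNorm row ≤ s * vecNorm u := by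
    have h := vecNorm_vecMul_le V⁻¹ u
    rwa [← hrow, hVinv] at h
  have hc_le : vecNorm w ≤ s := by
    have h := vecNorm_vecMul_le V (Pi.single en 1)
    rwa [hsingle, hVnorm, hnorm_single, mul_one] at h
  have hone : (1:ℝ) ≤ s * vecNorm w := by
    have h := vecNorm_vecMul_le V⁻¹ w
    rwa [hback, hVinv, hnorm_single] at h
  set a := vecNorm row with ha
  set b := vecNorm u with hb
  set c := vecNorm w with hc
  have ha0 : 0 ≤ a := vecNorm_nonneg' _
  have hb0 : 0 ≤ b := vecNorm_nonneg' _
  have hc0 : 0 ≤ c := vecNorm_nonneg' _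
  have hs0 : 0 ≤ s := Real.sqrt_nonneg _
  have hc_pos : 0 < c := by
    rcases lt_or_eq_of_le hc0 with h | h
    · exact h
    · rw [← h, mul_zero] at hone; linarith
  have hs_pos : 0 < s := by
    rcases lt_or_eq_of_le hs0 with h | h
    · exact h
    · rw [← h, zero_mul] at hone; linarith
  have hκ_pos : 0 < κ := hκsq ▸ mul_pos hs_pos hs_pos
  have hS : c ^ 2 = ∑ k, ‖V en k‖ ^ 2 := by
    rw [hc, vecNorm, Real.sq_sqrt (Finset.sum_nonneg fun i _ => sq_nonneg _)]
  have hsum : (∑ i, (‖V en i‖ ^ 2 / ∑ k, ‖V en k‖ ^ 2) * ‖f (D i i)‖ ^ 2)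
      = (∑ i, ‖u i‖ ^ 2) / c ^ 2 := by
    rw [← hS, Finset.sum_div]
    refine Finset.sum_congr rfl fun i _ => ?_
    rw [div_mul_eq_mul_div]
    congr 1
    simp [hu, norm_mul, mul_pow]
  have hE : Real.sqrt (∑ i, (‖V en i‖ ^ 2 / ∑ k, ‖V en k‖ ^ 2) * ‖f (D i i)‖ ^ 2) = b / c := by
    rw [hsum, Real.sqrt_div (Finset.sum_nonneg fun i _ => sq_nonneg _), Real.sqrt_sq hc0, hb, vecNorm]
  rw [hE]
  constructor
  · rw [div_le_div_iff₀ hκ_pos hc_pos]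
    calc a * c ≤ (s * b) * s := mul_le_mul ha_le hc_le hc0 (mul_nonneg hs0 hb0)
      _ = b * κ := by rw [← hκsq]; ring
  · rw [div_le_iff₀ hc_pos]
    calc b = b * 1 := (mul_one b).symm
      _ ≤ (s * a) * (s * c) := mul_le_mul hb_le hone zero_le_one (mul_nonneg hs0 ha0)
      _ = κ * a * c := by rw [← hκsq]; ring
end

section
/- Let H ∈ C^{n×n} be upper Hessenberg, 1 ≤ r ≤ n-1, and let H_- and H_+ denote its upper-left r×r and lower-right (n-r)×(n-r) corner blocks. If |H_{r+1,r}| ≤ ε', then Λ_{ε-ε'}(H_-) ∪ Λ_{ε-ε'}(H_+) ⊆ Λ_ε(H) for every ε > ε'. -/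
/-!
Zeroing the coupling entry `H_{r+1,r}` is a perturbation of norm at most `ε'`, so the resulting
matrix `H₀` satisfies `Λ_{ε-ε'}(H₀) ⊆ Λ_ε(H)`. As `H` is upper Hessenberg, `H₀` is block upper
triangular with diagonal blocks `H₋` and `H₊`. Perturbing one diagonal block of a block triangular
matrix perturbs the whole matrix by the same norm, and the spectrum of a block triangular matrix
contains the spectra of its diagonal blocks; hence `Λ_δ(H₋) ∪ Λ_δ(H₊) ⊆ Λ_δ(H₀)`.
-/

open Matrix

/-- ε-pseudospectrum of a matrix. -/
noncomputable def pseudospectrum {m : Type*} [Fintype m] [DecidableEq m] (ε : ℝ)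
    (M : Matrix m m ℂ) : Set ℂ :=
  {z | ∃ E : Matrix m m ℂ, opNorm E ≤ ε ∧ z ∈ spectrum ℂ (M + E)}

-- `opNorm M` is by definition the norm of `M` under this instance.
open scoped Matrix.Norms.L2Operator
open WithLp

namespace EuclideanSpace
variable {𝕜 : Type*} [RCLike 𝕜] {m n : Type*} [Fintype m] [Fintype n]

theorem norm_toLp_comp_equiv (e : m ≃ n) (x : n → 𝕜) :
    ‖toLp 2 (x ∘ e)‖ = ‖toLp 2 x‖ := by
  simp only [norm_eq, Function.comp_apply]
  rw [e.sum_comp (fun i => ‖x i‖ ^ 2)]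

theorem norm_sq_toLp_sumElim (x : m → 𝕜) (y : n → 𝕜) :
    ‖toLp 2 (Sum.elim x y)‖ ^ 2 = ‖toLp 2 x‖ ^ 2 + ‖toLp 2 y‖ ^ 2 := by
  simp only [norm_sq_eq, Fintype.sum_sum_type, Sum.elim_inl, Sum.elim_inr]

end EuclideanSpace

namespace Matrix
variable {𝕜 : Type*} [RCLike 𝕜] {m n p q : Type*} [Fintype m] [Fintype n] [Fintype p]
  [Fintype q]

theorem l2_opNorm_le_of_mulVec [DecidableEq n] {A : Matrix m n 𝕜} {C : ℝ} (hC : 0 ≤ C)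
    (h : ∀ x : n → 𝕜, ‖toLp 2 (A *ᵥ x)‖ ≤ C * ‖toLp 2 x‖) : ‖A‖ ≤ C :=
  ContinuousLinearMap.opNorm_le_bound _ hC fun x => h x.ofLp

theorem l2_opNorm_submatrix_equiv_le [DecidableEq n] [DecidableEq q] (A : Matrix m n 𝕜)
    (e₁ : p ≃ m) (e₂ : q ≃ n) : ‖A.submatrix e₁ e₂‖ ≤ ‖A‖ := by
  refine l2_opNorm_le_of_mulVec (norm_nonneg A) fun x => ?_
  rw [submatrix_mulVec_equiv, EuclideanSpace.norm_toLp_comp_equiv,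
    ← EuclideanSpace.norm_toLp_comp_equiv e₂.symm x]
  exact l2_opNorm_mulVec A (toLp 2 (x ∘ e₂.symm))

theorem l2_opNorm_single_le [DecidableEq m] [DecidableEq n] (i : m) (j : n) (c : 𝕜) :
    ‖(single i j c : Matrix m n 𝕜)‖ ≤ ‖c‖ := by
  refine l2_opNorm_le_of_mulVec (norm_nonneg c) fun x => ?_
  rw [single_mulVec]
  change ‖EuclideanSpace.single i (c * x j)‖ ≤ _
  rw [PiLp.norm_single, norm_mul]
  gcongr
  exact PiLp.norm_apply_le (toLp 2 x) j

theorem l2_opNorm_fromBlocks_zero₁₂_zero₂₁_le [DecidableEq n] [DecidableEq q] (A : Matrix m n 𝕜)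
    (D : Matrix p q 𝕜) : ‖fromBlocks A 0 0 D‖ ≤ max ‖A‖ ‖D‖ := by
  refine l2_opNorm_le_of_mulVec (by positivity) fun x => ?_
  rw [fromBlocks_mulVec]
  simp only [zero_mulVec, add_zero, zero_add]
  have hA : ‖toLp 2 (A *ᵥ (x ∘ Sum.inl))‖ ≤ max ‖A‖ ‖D‖ * ‖toLp 2 (x ∘ Sum.inl)‖ :=
    (l2_opNorm_mulVec A (toLp 2 (x ∘ Sum.inl))).trans (by gcongr; exact le_max_left _ _)
  have hD : ‖toLp 2 (D *ᵥ (x ∘ Sum.inr))‖ ≤ max ‖A‖ ‖D‖ * ‖toLp 2 (x ∘ Sum.inr)‖ :=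
    (l2_opNorm_mulVec D (toLp 2 (x ∘ Sum.inr))).trans (by gcongr; exact le_max_right _ _)
  have hx : ‖toLp 2 x‖ ^ 2 = ‖toLp 2 (x ∘ Sum.inl)‖ ^ 2 + ‖toLp 2 (x ∘ Sum.inr)‖ ^ 2 := by
    rw [← EuclideanSpace.norm_sq_toLp_sumElim, Sum.elim_comp_inl_inr]
  refine (sq_le_sq₀ (by positivity) (by positivity)).mp ?_
  rw [EuclideanSpace.norm_sq_toLp_sumElim, mul_pow, hx, mul_add, ← mul_pow, ← mul_pow]
  gcongr

end Matrix

section Spectrum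

variable {R : Type*} [CommRing R] {m p : Type*} [Fintype m] [Fintype p] [DecidableEq m]
  [DecidableEq p]

theorem Matrix.spectrum_fromBlocks_zero₂₁ (A : Matrix m m R) (B : Matrix m p R)
    (D : Matrix p p R) :
    spectrum R (fromBlocks A B 0 D) = spectrum R A ∪ spectrum R D := by
  ext z
  have hshift : algebraMap R _ z - fromBlocks A B 0 D =
      fromBlocks (algebraMap R _ z - A) (-B) 0 (algebraMap R _ z - D) := by
    simp only [Algebra.algebraMap_eq_smul_one, ← fromBlocks_one, fromBlocks_smul, smul_zero,
      sub_eq_add_neg, fromBlocks_neg, fromBlocks_add, neg_zero, add_zero, zero_add]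
  simp only [spectrum.mem_iff, hshift, isUnit_iff_isUnit_det, det_fromBlocks_zero₂₁,
    IsUnit.mul_iff, Set.mem_union, not_and_or]

theorem Matrix.spectrum_submatrix_equiv {n : Type*} [Fintype n] [DecidableEq n] (e : n ≃ m)
    (M : Matrix m m R) :
    spectrum R (M.submatrix e e) = spectrum R M :=
  AlgEquiv.spectrum_eq (reindexAlgEquiv R R e.symm) M

end Spectrum

def finSumFinSubEquiv {r n : ℕ} (h : r ≤ n) : Fin r ⊕ Fin (n - r) ≃ Fin n :=
  finSumFinEquiv.trans (finCongr (Nat.add_sub_cancel' h))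

@[simp]
theorem finSumFinSubEquiv_inl_val {r n : ℕ} (h : r ≤ n) (a : Fin r) :
    (finSumFinSubEquiv h (.inl a) : ℕ) = a :=
  rfl

@[simp]
theorem finSumFinSubEquiv_inr_val {r n : ℕ} (h : r ≤ n) (b : Fin (n - r)) :
    (finSumFinSubEquiv h (.inr b) : ℕ) = r + b :=
  rfl

def Matrix.IsUpperHessenberg {R : Type*} [Zero R] {n : ℕ} (H : Matrix (Fin n) (Fin n) R) :
    Prop :=
  ∀ i j : Fin n, (j : ℕ) + 1 < i → H i j = 0

theorem Matrix.IsUpperHessenberg.sub_single_submatrix_eq_fromBlocks {R : Type*} [AddGroup R]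
    {n r : ℕ} (hr : 1 ≤ r) (hrn : r < n) {H : Matrix (Fin n) (Fin n) R}
    (hH : H.IsUpperHessenberg) :
    let e := finSumFinSubEquiv hrn.le
    (H - single (⟨r, hrn⟩ : Fin n) (⟨r - 1, by omega⟩ : Fin n)
        (H ⟨r, hrn⟩ ⟨r - 1, by omega⟩)).submatrix e e =
      fromBlocks (H.submatrix (e ∘ .inl) (e ∘ .inl)) (H.submatrix (e ∘ .inl) (e ∘ .inr)) 0
        (H.submatrix (e ∘ .inr) (e ∘ .inr)) := by
  ext (a | a) (b | b) <;>
    simp only [submatrix_apply, Function.comp_apply, sub_apply, single_apply, Fin.ext_iff,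
      finSumFinSubEquiv_inl_val, finSumFinSubEquiv_inr_val, fromBlocks_apply₁₁,
      fromBlocks_apply₁₂, fromBlocks_apply₂₁, fromBlocks_apply₂₂, zero_apply]
  · rw [if_neg (by omega), sub_zero]
  · rw [if_neg (by omega), sub_zero]
  · by_cases hab : (a : ℕ) = 0 ∧ (b : ℕ) = r - 1
    · rw [if_pos (by omega), sub_eq_zero]
      congr 1 <;> ext <;> simp only [finSumFinSubEquiv_inl_val, finSumFinSubEquiv_inr_val] <;>
        omega
    · rw [if_neg (by omega), sub_zero]
      exact hH _ _ (by simp only [finSumFinSubEquiv_inl_val, finSumFinSubEquiv_inr_val]; omega)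
  · rw [if_neg (by omega), sub_zero]

section Pseudospectrum

variable {m p : Type*} [Fintype m] [DecidableEq m] [Fintype p] [DecidableEq p]

theorem mem_pseudospectrum {ε : ℝ} {M : Matrix m m ℂ} {z : ℂ} :
    z ∈ pseudospectrum ε M ↔ ∃ E : Matrix m m ℂ, ‖E‖ ≤ ε ∧ z ∈ spectrum ℂ (M + E) :=
  Iff.rfl

theorem pseudospectrum_subset_of_norm_sub_le {H H₀ : Matrix m m ℂ} {δ : ℝ} (h : ‖H - H₀‖ ≤ δ)
    (ε : ℝ) : pseudospectrum (ε - δ) H₀ ⊆ pseudospectrum ε H := by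
  rintro z ⟨E, hE : ‖E‖ ≤ ε - δ, hz⟩
  refine mem_pseudospectrum.2 ⟨H₀ - H + E, ?_, by rwa [← add_assoc, add_sub_cancel]⟩
  calc ‖H₀ - H + E‖ ≤ ‖H - H₀‖ + ‖E‖ := by rw [← norm_sub_rev]; exact norm_add_le _ _
    _ ≤ δ + (ε - δ) := add_le_add h hE
    _ = ε := by ring

theorem pseudospectrum_submatrix_equiv (ε : ℝ) (e : p ≃ m) (M : Matrix m m ℂ) :
    pseudospectrum ε (M.submatrix e e) = pseudospectrum ε M := by
  ext z
  constructor
  · rintro ⟨E, hE : ‖E‖ ≤ ε, hz⟩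
    refine ⟨E.submatrix e.symm e.symm, (l2_opNorm_submatrix_equiv_le E _ _).trans hE, ?_⟩
    have hsum : (M + E.submatrix e.symm e.symm).submatrix e e = M.submatrix e e + E := by
      ext i j
      simp
    rwa [← spectrum_submatrix_equiv e, hsum]
  · rintro ⟨E, hE : ‖E‖ ≤ ε, hz⟩
    refine ⟨E.submatrix e e, (l2_opNorm_submatrix_equiv_le E _ _).trans hE, ?_⟩
    rwa [show M.submatrix e e + E.submatrix e e = (M + E).submatrix e e from rfl,
      spectrum_submatrix_equiv]

theorem pseudospectrum_union_subset_fromBlocks_zero₂₁ (ε : ℝ) (A : Matrix m m ℂ)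
    (B : Matrix m p ℂ) (D : Matrix p p ℂ) :
    pseudospectrum ε A ∪ pseudospectrum ε D ⊆ pseudospectrum ε (fromBlocks A B 0 D) := by
  rintro z (⟨E, hE : ‖E‖ ≤ ε, hz⟩ | ⟨E, hE : ‖E‖ ≤ ε, hz⟩)
  · refine mem_pseudospectrum.2 ⟨fromBlocks E 0 0 0, ?_, ?_⟩
    · exact (l2_opNorm_fromBlocks_zero₁₂_zero₂₁_le E 0).trans (by simpa using hE)
    · rw [fromBlocks_add, add_zero, add_zero, add_zero, spectrum_fromBlocks_zero₂₁]
      exact Or.inl hz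
  · refine mem_pseudospectrum.2 ⟨fromBlocks 0 0 0 E, ?_, ?_⟩
    · exact (l2_opNorm_fromBlocks_zero₁₂_zero₂₁_le 0 E).trans (by simpa using hE)
    · rw [fromBlocks_add, add_zero, add_zero, add_zero, spectrum_fromBlocks_zero₂₁]
      exact Or.inr hz

end Pseudospectrum

/-- for an upper Hessenberg matrix `H` whose coupling subdiagonal entry
`H_{r+1,r}` has modulus at most `ε'`, the `(ε-ε')`-pseudospectra of the upper-left `r×r`
and lower-right `(n-r)×(n-r)` corners are contained in `Λ_ε(H)`, for every `ε > ε'`. -/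
theorem stmt_15 (n r : ℕ) (hr₁ : 1 ≤ r) (hr₂ : r ≤ n - 1)
    (H : Matrix (Fin n) (Fin n) ℂ)
    (hHess : ∀ i j : Fin n, (j : ℕ) + 1 < (i : ℕ) → H i j = 0)
    (ε' : ℝ)
    (hcoupling : ‖H ⟨r, by omega⟩ ⟨r - 1, by omega⟩‖ ≤ ε')
    (Hminus : Matrix (Fin r) (Fin r) ℂ)
    (hHminus : Hminus = H.submatrix
      (fun i : Fin r => (⟨(i : ℕ), by have := i.isLt; omega⟩ : Fin n))
      (fun j : Fin r => (⟨(j : ℕ), by have := j.isLt; omega⟩ : Fin n)))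
    (Hplus : Matrix (Fin (n - r)) (Fin (n - r)) ℂ)
    (hHplus : Hplus = H.submatrix
      (fun i : Fin (n - r) => (⟨r + (i : ℕ), by have := i.isLt; omega⟩ : Fin n))
      (fun j : Fin (n - r) => (⟨r + (j : ℕ), by have := j.isLt; omega⟩ : Fin n)))
    (ε : ℝ) :
    pseudospectrum (ε - ε') Hminus ∪ pseudospectrum (ε - ε') Hplus ⊆ pseudospectrum ε H := by
  have hrn : r < n := by omega
  have hcut : ‖H - (H - single (⟨r, hrn⟩ : Fin n) (⟨r - 1, by omega⟩ : Fin n)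
      (H ⟨r, hrn⟩ ⟨r - 1, by omega⟩))‖ ≤ ε' := by
    rw [sub_sub_cancel]
    exact (l2_opNorm_single_le _ _ _).trans hcoupling
  refine subset_trans ?_ (pseudospectrum_subset_of_norm_sub_le hcut ε)
  rw [← pseudospectrum_submatrix_equiv _ (finSumFinSubEquiv hrn.le),
    IsUpperHessenberg.sub_single_submatrix_eq_fromBlocks hr₁ hrn hHess, hHminus, hHplus]
  exact pseudospectrum_union_subset_fromBlocks_zero₂₁ _ _ _ _
end

section
/- Let H ∈ C^{n×n}, s ∈ C, η_2 ≥ η_1 > 0, and suppose η_1 + η_2 ≤ gap(H)/2, where gap(H) is the minimum pairwise distance between distinct eigenvalues of H. Let w be uniform on the disk D(0, η_2) and š = s + w. Then P[dist(š, Spec H) ≥ η_1] ≥ 1 - (η_1/η_2)². -/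
open MeasureTheory Matrix

/-- if `η₁ + η₂ ≤ gap(H)/2` and `w` is uniform on the disk `D(0, η₂) ⊆ ℂ`,
and `š = s + w`, then `P[dist(š, Spec H) ≥ η₁] ≥ 1 - (η₁/η₂)²`. -/
theorem stmt_17 (n : ℕ) (hn : 0 < n) (H : Matrix (Fin n) (Fin n) ℂ) (s : ℂ)
    (η₁ η₂ : ℝ) (hη : 0 < η₁) (hη' : η₁ ≤ η₂)
    (hgap : ∀ lam mu : ℂ, lam ∈ spectrum ℂ H → mu ∈ spectrum ℂ H → lam ≠ mu →
      2 * (η₁ + η₂) ≤ dist lam mu)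
    (μ : Measure ℂ)
    (hμ : μ = (volume (Metric.closedBall (0 : ℂ) η₂))⁻¹ •
      volume.restrict (Metric.closedBall (0 : ℂ) η₂)) :
    1 - (η₁ / η₂) ^ 2 ≤
      (μ {w | η₁ ≤ Metric.infDist (s + w) (spectrum ℂ H)}).toReal := by
  have hη₂ : 0 < η₂ := hη.trans_le hη'
  haveI : NeZero n := ⟨hn.ne'⟩
  haveI : Nonempty (Fin n) := Fin.pos_iff_nonempty.mp hn
  set S : Set ℂ := spectrum ℂ H with hSdef
  have hS : S.Nonempty := spectrum.nonempty_of_isAlgClosed_of_finiteDimensional ℂ H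
  set B : Set ℂ := Metric.closedBall (0 : ℂ) η₂ with hBdef
  have hVol : volume B = ENNReal.ofReal η₂ ^ 2 * NNReal.pi := Complex.volume_closedBall 0 η₂
  have hV0 : volume B ≠ 0 := (Metric.measure_closedBall_pos volume 0 hη₂).ne'
  have hVt : volume B ≠ ⊤ := by
    rw [hVol]
    exact ENNReal.mul_ne_top (ENNReal.pow_ne_top ENNReal.ofReal_ne_top) ENNReal.coe_ne_top
  -- Bad set
  set Bad : Set ℂ := {w | Metric.infDist (s + w) S < η₁} with hBad
  have hBadOpen : IsOpen Bad := by
    have : Continuous fun w : ℂ => Metric.infDist (s + w) S :=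
      Metric.continuous_infDist_pt S |>.comp (continuous_const.add continuous_id)
    exact isOpen_lt this continuous_const
  have hBadMeas : MeasurableSet Bad := hBadOpen.measurableSet
  -- key geometric claim
  have hsub : ∃ c : ℂ, Bad ∩ B ⊆ Metric.closedBall c η₁ := by
    rcases Set.eq_empty_or_nonempty (Bad ∩ B) with he | ⟨w₀, hw₀b, hw₀B⟩
    · exact ⟨0, by rw [he]; exact Set.empty_subset _⟩
    · obtain ⟨lam₀, hlam₀S, hlam₀⟩ := (Metric.infDist_lt_iff hS).mp hw₀b
      refine ⟨lam₀ - s, fun w ⟨hwb, hwB⟩ => ?_⟩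
      obtain ⟨lam, hlamS, hlam⟩ := (Metric.infDist_lt_iff hS).mp hwb
      have hww₀ : dist (s + w) (s + w₀) ≤ 2 * η₂ := by
        have h1 : dist w (0 : ℂ) ≤ η₂ := Metric.mem_closedBall.mp hwB
        have h2 : dist w₀ (0 : ℂ) ≤ η₂ := Metric.mem_closedBall.mp hw₀B
        calc dist (s + w) (s + w₀) = dist w w₀ := dist_add_left s w w₀
          _ ≤ dist w 0 + dist w₀ 0 := dist_triangle_right w w₀ 0
          _ ≤ 2 * η₂ := by linarith
      have heq : lam = lam₀ := by
        by_contra hne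
        have := hgap lam lam₀ hlamS hlam₀S hne
        have : dist lam lam₀ ≤ dist lam (s + w) + dist (s + w) (s + w₀) + dist (s + w₀) lam₀ :=
          dist_triangle4 lam (s + w) (s + w₀) lam₀
        rw [dist_comm lam (s + w)] at this
        linarith [hgap lam lam₀ hlamS hlam₀S hne]
      rw [heq] at hlam
      have : dist w (lam₀ - s) = dist (s + w) lam₀ := by
        rw [dist_eq_norm, dist_eq_norm]; ring_nf
      rw [Metric.mem_closedBall, this]
      exact hlam.le
  obtain ⟨c, hc⟩ := hsub
  -- measure bound for Bad
  have hBadBound : μ Bad ≤ ENNReal.ofReal ((η₁ / η₂) ^ 2) := by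
    have h1 : μ Bad = (volume B)⁻¹ * volume (Bad ∩ B) := by
      rw [hμ, Measure.smul_apply, Measure.restrict_apply hBadMeas]; rfl
    have h2 : volume (Bad ∩ B) ≤ ENNReal.ofReal η₁ ^ 2 * NNReal.pi := by
      calc volume (Bad ∩ B) ≤ volume (Metric.closedBall c η₁) := measure_mono hc
        _ = ENNReal.ofReal η₁ ^ 2 * NNReal.pi := Complex.volume_closedBall c η₁
    have hkey : volume B * ENNReal.ofReal ((η₁ / η₂) ^ 2) =
        ENNReal.ofReal η₁ ^ 2 * NNReal.pi := by
      rw [hVol, ← ENNReal.ofReal_pow hη₂.le, ← ENNReal.ofReal_pow hη.le]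
      rw [mul_right_comm, ← ENNReal.ofReal_mul (by positivity)]
      congr 2
      field_simp
    calc μ Bad = (volume B)⁻¹ * volume (Bad ∩ B) := h1
      _ ≤ (volume B)⁻¹ * (volume B * ENNReal.ofReal ((η₁ / η₂) ^ 2)) := by
          rw [hkey]; exact mul_le_mul_right h2 _
      _ = ((volume B)⁻¹ * volume B) * ENNReal.ofReal ((η₁ / η₂) ^ 2) := by ring
      _ = ENNReal.ofReal ((η₁ / η₂) ^ 2) := by
          rw [ENNReal.inv_mul_cancel hV0 hVt, one_mul]
  -- μ is a probability measure
  have hμuniv : μ Set.univ = 1 := by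
    rw [hμ, Measure.smul_apply, Measure.restrict_apply MeasurableSet.univ, Set.univ_inter]
    exact ENNReal.inv_mul_cancel hV0 hVt
  -- the good set is the complement of Bad
  have hGood : {w : ℂ | η₁ ≤ Metric.infDist (s + w) S} = Badᶜ := by
    ext w; simp [hBad, not_lt]
  have hBad1 : μ Bad ≤ 1 := by rw [← hμuniv]; exact measure_mono (Set.subset_univ _)
  rw [hGood, measure_compl hBadMeas (hBad1.trans_lt ENNReal.one_lt_top).ne]
  rw [hμuniv]
  rw [ENNReal.toReal_sub_of_le hBad1 ENNReal.one_ne_top, ENNReal.toReal_one]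
  have : (μ Bad).toReal ≤ (η₁ / η₂) ^ 2 := by
    have := ENNReal.toReal_mono (by finiteness) hBadBound
    rwa [ENNReal.toReal_ofReal (by positivity)] at this
  linarith
end
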